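/- arXiv:2010.02641 — 2 statements merged into one kernel-verified Lean document; each statement's English description precedes it below -/
import Mathlib

section
/- Let 𝔯 be a totally real subspace of E, let T ∈ 𝔯, let W ∈ E be orthogonal to ℂ𝔯 = 𝔯 + J𝔯, and let b, y ∈ ℝ. Then exp(ad(bB+JT+W+yZ))(𝔯) = exp(ad(ρ(b/2)JT))(𝔯) as subspaces of 𝔰. -/
open scoped RealInnerProductSpace

noncomputable section

namespace CHn

/-- `E n` is `ℂ^{n-1}`, viewed as a real inner product space with `⟪U,V⟫ = Re⟪U,V⟫_ℂ`
and complex structure `JU = iU`. -/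
abbrev E (n : ℕ) := EuclideanSpace ℂ (Fin (n - 1))

/-- The solvable part `𝔰 = 𝔞 ⊕ 𝔫` of the Iwasawa decomposition of `𝔰𝔲(1,n)`, modeled as
`ℝB ⊕ E ⊕ ℝZ`; the element `(a, U, x)` represents `aB + U + xZ`. -/
abbrev S (n : ℕ) := ℝ × E n × ℝ

variable (n : ℕ)

/-- The vector `B`. -/
def B : S n := (1, 0, 0)

/-- The vector `Z`. -/
def Z : S n := (0, 0, 1)

/-- The inner product of `𝔰` (`B`, `Z` unit, orthogonal direct sum `ℝB ⊕ E ⊕ ℝZ`). -/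
def sInner (X Y : S n) : ℝ := X.1 * Y.1 + ⟪X.2.1, Y.2.1⟫ + X.2.2 * Y.2.2

/-- The ambient complex structure on `𝔰`: `J(aB + U + xZ) = -xB + JU + aZ`. -/
def Js : S n →ₗ[ℝ] S n where
  toFun X := (-X.2.2, Complex.I • X.2.1, X.1)
  map_add' X Y := by
    refine Prod.ext ?_ (Prod.ext ?_ ?_)
    · simp; ring
    · simp [smul_add]
    · simp
  map_smul' c X := by
    refine Prod.ext ?_ (Prod.ext ?_ ?_)
    · simp only [Prod.smul_fst, Prod.smul_snd, smul_eq_mul, RingHom.id_apply]; ring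
    · simp [Prod.smul_fst, Prod.smul_snd, smul_comm c Complex.I]
    · simp

/-- The Lie bracket of `𝔰`:
`[aB + U + xZ, bB + V + yZ] = (1/2)(aV - bU) + (ay - bx + ⟪JU, V⟫)Z`. -/
def bra (X Y : S n) : S n :=
  (0, (2⁻¹ : ℝ) • (X.1 • Y.2.1 - Y.1 • X.2.1),
    X.1 * Y.2.2 - Y.1 * X.2.2 + ⟪Complex.I • X.2.1, Y.2.1⟫)

/-- `ad(X) = [X, ·]`, a (continuous) linear endomorphism of `𝔰`. -/
def ad (X : S n) : S n →L[ℝ] S n :=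
  LinearMap.toContinuousLinearMap
    { toFun := bra n X
      map_add' := fun Y Y' => by
        unfold bra
        refine Prod.ext ?_ (Prod.ext ?_ ?_)
        · simp
        · simp only [Prod.fst_add, Prod.snd_add]
          module
        · simp only [Prod.fst_add, Prod.snd_add, inner_add_right]
          ring
      map_smul' := fun c Y => by
        unfold bra
        have h : ⟪Complex.I • X.2.1, c • Y.2.1⟫ = c * ⟪Complex.I • X.2.1, Y.2.1⟫ :=
          real_inner_smul_right _ _ _
        refine Prod.ext ?_ (Prod.ext ?_ ?_)
        · simp
        · simp only [Prod.smul_fst, Prod.smul_snd, smul_eq_mul, RingHom.id_apply]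
          module
        · simp only [Prod.smul_fst, Prod.smul_snd, smul_eq_mul, h, RingHom.id_apply]
          ring }

/-- `exp(ad(X)) = Σ_{k ≥ 0} ad(X)^k / k!`. -/
def expAd (X : S n) : S n →L[ℝ] S n := NormedSpace.exp (ad n X)

/-- `ρ(t) = (e^t - 1)/t` for `t ≠ 0`, `ρ(0) = 1`. -/
def rho (t : ℝ) : ℝ := if t = 0 then 1 else (Real.exp t - 1) / t

/-- The Iwasawa group `AN`, modeled as `G = ℝ × E × ℝ`. -/
abbrev G (n : ℕ) := ℝ × E n × ℝ

/-- The product of `G`: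
`(a,P,p)·(b,Q,q) = (a+b, P + e^{a/2}Q, p + e^a q + (1/2)e^{a/2}⟪JP,Q⟫)`. -/
def gmul (g h : G n) : G n :=
  (g.1 + h.1, g.2.1 + Real.exp (g.1 / 2) • h.2.1,
    g.2.2 + Real.exp g.1 * h.2.2 + 2⁻¹ * Real.exp (g.1 / 2) * ⟪Complex.I • g.2.1, h.2.1⟫)

/-- The Lie exponential `Exp : 𝔰 → G`, `Exp(cB + W + zZ) = (c, ρ(c/2)W, ρ(c)z)`. -/
def Exp (X : S n) : G n := (X.1, rho (X.1 / 2) • X.2.1, rho X.1 * X.2.2)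

/-- The inclusion of `E` into `𝔰`. -/
def inE : E n →ₗ[ℝ] S n where
  toFun U := (0, U, 0)
  map_add' U V := by refine Prod.ext ?_ (Prod.ext ?_ ?_) <;> simp
  map_smul' c U := by refine Prod.ext ?_ (Prod.ext ?_ ?_) <;> simp

/-- A real subspace of `E` is totally real if `⟪Ju, v⟫ = 0` for all its elements. -/
def TotallyRealE (V : Submodule ℝ (E n)) : Prop :=
  ∀ u ∈ V, ∀ v ∈ V, ⟪Complex.I • u, v⟫ = 0

/-- A real subspace of `E` is complex if it is `J`-invariant. -/
def IsComplexE (V : Submodule ℝ (E n)) : Prop :=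
  ∀ u ∈ V, Complex.I • u ∈ V

/-- The maximal complex subspace `V ∩ JV` of a real subspace `V` of `E`. -/
def maxCE (V : Submodule ℝ (E n)) : Set (E n) := {w | w ∈ V ∧ Complex.I • w ∈ V}

/-- `V` is a CR subspace of `E` if the orthogonal complement in `V` of its maximal
complex subspace `V ∩ JV` is totally real. -/
def IsCRE (V : Submodule ℝ (E n)) : Prop :=
  ∀ u ∈ V, ∀ v ∈ V, (∀ w ∈ maxCE n V, ⟪u, w⟫ = 0) →
    (∀ w ∈ maxCE n V, ⟪v, w⟫ = 0) → ⟪Complex.I • u, v⟫ = 0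

/-- A subset of `𝔰` is totally real if `⟪Ju, v⟫ = 0` for all its elements. -/
def TotallyRealS (V : Set (S n)) : Prop := ∀ u ∈ V, ∀ v ∈ V, sInner n (Js n u) v = 0

/-- The maximal complex subspace `V ∩ JV` of a real subspace `V` of `𝔰`. -/
def maxCS (V : Set (S n)) : Set (S n) := {x | x ∈ V ∧ Js n x ∈ V}

/-- `V` is a CR subspace of `𝔰` if the orthogonal complement in `V` of its maximal
complex subspace `V ∩ JV` is totally real. -/
def IsCRS (V : Set (S n)) : Prop :=
  ∀ u ∈ V, ∀ v ∈ V, (∀ w ∈ maxCS n V, sInner n u w = 0) →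
    (∀ w ∈ maxCS n V, sInner n v w = 0) → sInner n (Js n u) v = 0


/-!
On the ideal `E ⊕ ℝZ`, `ad(bB + C + yZ)` acts on `E` by `b/2`, on `Z` by `b`, and maps `V ∈ E`
into `Z` with coefficient `⟪JC, V⟫`. Summing the exponential series, `exp(ad(bB + C + yZ))` sends
`V ∈ E` to `e^{b/2} V + ρ(b/2) e^{b/2} ⟪JC, V⟫ Z`. For `C = JT + W` with `W ⟂ ℂ𝔯` and `V ∈ 𝔯` the
coefficient is `-⟪T, V⟫`, so on `𝔯` the map `exp(ad(bB + JT + W + yZ))` is `e^{b/2}` times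
`exp(ad(ρ(b/2) JT))`, and a nonzero multiple of a linear map has the same image of `𝔯`.
-/

lemma real_inner_I_smul_left {ι : Type*} [Fintype ι] (u v : EuclideanSpace ℂ ι) :
    ⟪Complex.I • u, v⟫ = -⟪u, Complex.I • v⟫ := by
  simp only [PiLp.inner_apply, ← Finset.sum_neg_distrib]
  refine Finset.sum_congr rfl fun i _ => ?_
  simp [Complex.inner, Complex.mul_re]
  ring

lemma real_inner_I_smul_I_smul_left {ι : Type*} [Fintype ι] (u v : EuclideanSpace ℂ ι) :
    ⟪Complex.I • Complex.I • u, v⟫ = -⟪u, v⟫ := by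
  rw [smul_smul, Complex.I_mul_I, neg_one_smul, inner_neg_left]

lemma Submodule.map_eq_map_of_eqOn {R M M₂ : Type*} [Semiring R] [AddCommMonoid M]
    [AddCommMonoid M₂] [Module R M] [Module R M₂] {f g : M →ₗ[R] M₂} {p : Submodule R M}
    (h : Set.EqOn f g p) : p.map f = p.map g :=
  SetLike.coe_injective <| by simpa only [Submodule.map_coe] using h.image_eq

lemma exp_apply_eq_of_hasSum {𝕂 V : Type*} [RCLike 𝕂] [NormedAddCommGroup V] [NormedSpace 𝕂 V]
    [CompleteSpace V] {A : V →L[𝕂] V} {v w : V}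
    (h : HasSum (fun k => (k.factorial⁻¹ : 𝕂) • (A ^ k) v) w) :
    NormedSpace.exp A v = w :=
  ((NormedSpace.exp_series_hasSum_exp' (𝕂 := 𝕂) A).mapL (ContinuousLinearMap.apply 𝕂 V v)).unique h

lemma ad_apply_mk_zero (b y z : ℝ) (C U : E n) :
    ad n (b, C, y) (0, U, z) = (0, (b / 2) • U, b * z + ⟪Complex.I • C, U⟫) := by
  refine Prod.ext rfl (Prod.ext ?_ ?_)
  · show (2⁻¹ : ℝ) • (b • U - (0 : ℝ) • C) = (b / 2) • U
    rw [zero_smul, sub_zero, smul_smul, inv_mul_eq_div]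
  · show b * z - 0 * y + ⟪Complex.I • C, U⟫ = b * z + ⟪Complex.I • C, U⟫
    ring

def adPowCoeff (b : ℝ) : ℕ → ℝ
  | 0 => 0
  | k + 1 => b * adPowCoeff b k + (b / 2) ^ k

lemma adPowCoeff_eq {b : ℝ} (hb : b ≠ 0) (k : ℕ) :
    adPowCoeff b k = 2 / b * (b ^ k - (b / 2) ^ k) := by
  induction k with
  | zero => simp [adPowCoeff]
  | succ k ih =>
    rw [adPowCoeff, ih]
    field_simp
    ring

lemma adPowCoeff_zero_of_ne_one {k : ℕ} (hk : k ≠ 1) : adPowCoeff 0 k = 0 := by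
  match k, hk with
  | 0, _ => rfl
  | k + 2, _ => simp [adPowCoeff]

lemma hasSum_factorial_inv_mul_pow (x : ℝ) :
    HasSum (fun k => (k.factorial⁻¹ : ℝ) * x ^ k) (Real.exp x) := by
  simpa [Real.exp_eq_exp_ℝ] using NormedSpace.exp_series_hasSum_exp' (𝕂 := ℝ) x

lemma hasSum_adPowCoeff (b : ℝ) :
    HasSum (fun k => (k.factorial⁻¹ : ℝ) * adPowCoeff b k) (rho (b / 2) * Real.exp (b / 2)) := by
  rcases eq_or_ne b 0 with rfl | hb
  · simpa [adPowCoeff, rho] using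
      hasSum_single (f := fun k => (k.factorial⁻¹ : ℝ) * adPowCoeff 0 k) 1
        fun k hk => by simp [adPowCoeff_zero_of_ne_one hk]
  · have hsum : rho (b / 2) * Real.exp (b / 2) = 2 / b * (Real.exp b - Real.exp (b / 2)) := by
      rw [rho, if_neg (div_ne_zero hb two_ne_zero), ← add_halves b, Real.exp_add, add_halves]
      field_simp
    have hterm : (fun k => (k.factorial⁻¹ : ℝ) * adPowCoeff b k) =
        fun k => 2 / b * ((k.factorial⁻¹ : ℝ) * b ^ k - (k.factorial⁻¹ : ℝ) * (b / 2) ^ k) := by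
      funext k
      rw [adPowCoeff_eq hb]
      ring
    rw [hsum, hterm]
    exact ((hasSum_factorial_inv_mul_pow b).sub
      (hasSum_factorial_inv_mul_pow (b / 2))).mul_left (2 / b)

lemma ad_pow_apply_inE (b y : ℝ) (C V : E n) (k : ℕ) :
    (ad n (b, C, y) ^ k) (inE n V) =
      (0, (b / 2) ^ k • V, ⟪Complex.I • C, V⟫ * adPowCoeff b k) := by
  induction k with
  | zero => simp [adPowCoeff, inE]
  | succ k ih =>
    rw [pow_succ', mul_apply_eq_comp, ih, ad_apply_mk_zero, real_inner_smul_right,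
      smul_smul, ← pow_succ', adPowCoeff]
    refine Prod.ext rfl (Prod.ext rfl ?_)
    ring

lemma expAd_apply_inE (b y : ℝ) (C V : E n) :
    expAd n (b, C, y) (inE n V) =
      (0, Real.exp (b / 2) • V, ⟪Complex.I • C, V⟫ * (rho (b / 2) * Real.exp (b / 2))) := by
  have hterm (k : ℕ) : (k.factorial⁻¹ : ℝ) • (ad n (b, C, y) ^ k) (inE n V) =
      (0, ((k.factorial⁻¹ : ℝ) * (b / 2) ^ k) • V,
        ⟪Complex.I • C, V⟫ * ((k.factorial⁻¹ : ℝ) * adPowCoeff b k)) := by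
    rw [ad_pow_apply_inE]
    refine Prod.ext (by simp) (Prod.ext ?_ ?_)
    · simp only [Prod.smul_snd, Prod.smul_fst, smul_smul]
    · simp only [Prod.smul_snd, smul_eq_mul]
      ring
  refine exp_apply_eq_of_hasSum ?_
  simp only [hterm]
  exact hasSum_zero.prodMk (((hasSum_factorial_inv_mul_pow (b / 2)).smul_const V).prodMk
    ((hasSum_adPowCoeff b).mul_left ⟪Complex.I • C, V⟫))

theorem statement8_general (n : ℕ) (𝔯 : Submodule ℝ (E n))
    (T : E n) (W : E n)
    (hW : ∀ u ∈ 𝔯, ⟪W, u⟫ = 0 ∧ ⟪W, Complex.I • u⟫ = 0) (b y : ℝ) :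
    Submodule.map (expAd n ((b, Complex.I • T + W, y) : S n)).toLinearMap
        (Submodule.map (inE n) 𝔯) =
      Submodule.map (expAd n ((0, rho (b / 2) • (Complex.I • T), 0) : S n)).toLinearMap
        (Submodule.map (inE n) 𝔯) := by
  have key : Set.EqOn ((expAd n (b, Complex.I • T + W, y)).toLinearMap ∘ₗ inE n)
      (Real.exp (b / 2) • (expAd n (0, rho (b / 2) • Complex.I • T, 0)).toLinearMap ∘ₗ inE n)
      𝔯 := by
    intro V hV
    show expAd n _ (inE n V) = Real.exp (b / 2) • expAd n _ (inE n V)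
    have hJC : ⟪Complex.I • (Complex.I • T + W), V⟫ = -⟪T, V⟫ := by
      rw [smul_add, inner_add_left, real_inner_I_smul_I_smul_left, real_inner_I_smul_left,
        (hW V hV).2, neg_zero, add_zero]
    rw [expAd_apply_inE, expAd_apply_inE, hJC, smul_comm, real_inner_smul_left,
      real_inner_I_smul_I_smul_left]
    refine Prod.ext (by simp) (Prod.ext (by simp) ?_)
    simp only [Prod.smul_snd, smul_eq_mul, rho, zero_div, if_true, Real.exp_zero]
    ring
  rw [← Submodule.map_comp, ← Submodule.map_comp]
  exact (Submodule.map_eq_map_of_eqOn key).trans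
    (Submodule.map_smul _ _ _ (Real.exp_ne_zero (b / 2)))

/-- for `𝔯` totally real, `T ∈ 𝔯`, `W ⟂ ℂ𝔯`, `b, y ∈ ℝ`:
`exp(ad(bB+JT+W+yZ))(𝔯) = exp(ad(ρ(b/2)JT))(𝔯)` as subspaces of `𝔰`. -/
theorem statement8 (n : ℕ) (hn : 2 ≤ n) (𝔯 : Submodule ℝ (E n)) (h𝔯 : TotallyRealE n 𝔯)
    (T : E n) (hT : T ∈ 𝔯) (W : E n)
    (hW : ∀ u ∈ 𝔯, ⟪W, u⟫ = 0 ∧ ⟪W, Complex.I • u⟫ = 0) (b y : ℝ) :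
    Submodule.map (expAd n ((b, Complex.I • T + W, y) : S n)).toLinearMap
        (Submodule.map (inE n) 𝔯) =
      Submodule.map (expAd n ((0, rho (b / 2) • (Complex.I • T), 0) : S n)).toLinearMap
        (Submodule.map (inE n) 𝔯) :=
  statement8_general n 𝔯 T W hW b y

end CHn
end
end

section
/- Let 𝔯 be a totally real subspace of E, let T ∈ 𝔯, let W ∈ E be orthogonal to ℂ𝔯 = 𝔯 + J𝔯, and let y ∈ ℝ. Then the subspace exp(ad(2JT+2W+yZ))(ℝB ⊕ 𝔯) of 𝔰 is a CR subspace of 𝔰 if and only if T = 0; in that case it equals ℝ(B − W − yZ) ⊕ 𝔯 and is totally real. -/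
open scoped RealInnerProductSpace

noncomputable section

namespace CHn

variable (n : ℕ)

/-!
Write `X = 2JT + 2W + yZ`. Since `X` has no `B`-component, `ad(X)²` lands in `ℝ⟪JX, X⟫Z = 0`,
so `exp(ad X) = 1 + ad X` and the subspace is `V = {F(b, U) : b ∈ ℝ, U ∈ 𝔯}` with
`F(b, U) = bB + U - b(JT + W) - (by + 2⟪T, U⟫)Z`.
On `V` the form `ω(u, v) = ⟪Ju, v⟫` reads `ω(F(b, U), F(b', U')) = b'⟪T, U⟫ - b⟪T, U'⟫`.
Hence `V` is totally real iff `T = 0`. Moreover `V` contains no complex line: if `w, Jw ∈ V`,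
then `‖w‖² = ω(w, Jw)`, and comparing the `B`- and `Z`-components of `w` and `Jw` turns this
into `2‖w‖² = ⟪w, B⟫² + ⟪w, Z⟫²`, forcing `w = 0`. So `V` is CR iff it is totally real.
-/

variable {n}

theorem _root_.NormedSpace.exp_eq_one_add_of_mul_self_eq_zero {𝕂 𝔸 : Type*} [Field 𝕂]
    [CharZero 𝕂] [Ring 𝔸] [Algebra 𝕂 𝔸] [TopologicalSpace 𝔸] [IsTopologicalRing 𝔸] {x : 𝔸}
    (hx : x * x = 0) : NormedSpace.exp x = 1 + x := by
  have hpow : ∀ k ∉ Finset.range 2, ((k.factorial : 𝕂)⁻¹ • x ^ k) = 0 := fun k hk => by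
    obtain ⟨m, rfl⟩ := Nat.exists_eq_add_of_le' (not_lt.1 (Finset.mem_range.not.1 hk))
    rw [pow_add, sq, hx, mul_zero, smul_zero]
  rw [NormedSpace.exp_eq_tsum 𝕂]
  dsimp only
  rw [tsum_eq_sum hpow]
  simp [Finset.sum_range_succ]

theorem I_smul_I_smul {M : Type*} [AddCommGroup M] [Module ℂ M] (u : M) :
    Complex.I • Complex.I • u = -u := by
  rw [smul_smul, Complex.I_mul_I, neg_one_smul]

section EuclideanSpace

variable {ι : Type*} [Fintype ι]

theorem inner_I_smul_left (u v : EuclideanSpace ℂ ι) :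
    ⟪Complex.I • u, v⟫ = -⟪u, Complex.I • v⟫ := by
  simp only [PiLp.inner_apply, PiLp.smul_apply, smul_eq_mul, Complex.inner,
    ← Finset.sum_neg_distrib]
  congr 1; ext i
  simp; ring

theorem inner_I_smul_I_smul (u v : EuclideanSpace ℂ ι) :
    ⟪Complex.I • u, Complex.I • v⟫ = ⟪u, v⟫ := by
  simp only [PiLp.inner_apply, PiLp.smul_apply, smul_eq_mul, Complex.inner]
  congr 1; ext i
  simp

theorem inner_I_smul_self (u : EuclideanSpace ℂ ι) : ⟪Complex.I • u, u⟫ = 0 := by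
  have := inner_I_smul_left u u
  rw [real_inner_comm (Complex.I • u) u] at this
  linarith

end EuclideanSpace

theorem Js_apply (x : S n) : Js n x = (-x.2.2, Complex.I • x.2.1, x.1) := rfl

theorem sInner_Js_Js (x y : S n) : sInner n (Js n x) (Js n y) = sInner n x y := by
  simp only [sInner, Js_apply, inner_I_smul_I_smul]
  ring

theorem sInner_self_nonneg (x : S n) : 0 ≤ sInner n x x := by
  unfold sInner
  nlinarith [real_inner_self_nonneg (x := x.2.1)]

theorem sInner_self_eq_zero {x : S n} : sInner n x x = 0 ↔ x = 0 := by
  refine ⟨fun h => ?_, fun h => by simp [h, sInner]⟩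
  unfold sInner at h
  have hE := real_inner_self_nonneg (x := x.2.1)
  have h1 : x.1 = 0 := by nlinarith
  have h3 : x.2.2 = 0 := by nlinarith
  have h2 : x.2.1 = 0 := (inner_self_eq_zero (𝕜 := ℝ)).1 (by rw [h1, h3] at h; linarith)
  exact Prod.ext h1 (Prod.ext h2 h3)

theorem TotallyRealS.isCRS {V : Set (S n)} (hV : TotallyRealS n V) : IsCRS n V :=
  fun u hu v hv _ _ => hV u hu v hv

theorem isCRS_iff_totallyRealS {V : Set (S n)} (hV : ∀ w ∈ maxCS n V, w = 0) :
    IsCRS n V ↔ TotallyRealS n V := by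
  refine ⟨fun h u hu v hv => h u hu v hv ?_ ?_, TotallyRealS.isCRS⟩ <;>
  · intro w hw
    simp [hV w hw, sInner]

theorem ad_apply (X Y : S n) : ad n X Y = bra n X Y := rfl

theorem ad_mul_self_eq_zero {X : S n} (hX : X.1 = 0) : ad n X * ad n X = 0 := by
  refine ContinuousLinearMap.ext fun Y => ?_
  show bra n X (bra n X Y) = 0
  simp only [bra, hX]
  refine Prod.ext rfl (Prod.ext ?_ ?_)
  · simp
  · simp [inner_smul_right, inner_I_smul_self]

theorem expAd_apply_of_fst_eq_zero {X : S n} (hX : X.1 = 0) (Y : S n) :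
    expAd n X Y = Y + ad n X Y := by
  rw [expAd, NormedSpace.exp_eq_one_add_of_mul_self_eq_zero (𝕂 := ℝ) (ad_mul_self_eq_zero hX)]
  rfl

theorem smul_B_add_inE (b : ℝ) (U : E n) : b • B n + inE n U = (b, U, 0) := by
  refine Prod.ext ?_ (Prod.ext ?_ ?_) <;> simp [B, inE]

theorem mem_span_singleton_sup_map_inE {𝔯 : Submodule ℝ (E n)} {w v : S n} :
    v ∈ Submodule.span ℝ {w} ⊔ Submodule.map (inE n) 𝔯 ↔
      ∃ b : ℝ, ∃ U ∈ 𝔯, v = b • w + inE n U := by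
  simp only [Submodule.mem_sup, Submodule.mem_span_singleton, Submodule.mem_map]
  constructor
  · rintro ⟨_, ⟨b, rfl⟩, _, ⟨U, hU, rfl⟩, rfl⟩
    exact ⟨b, U, hU, rfl⟩
  · rintro ⟨b, U, hU, rfl⟩
    exact ⟨_, ⟨b, rfl⟩, _, ⟨U, hU, rfl⟩, rfl⟩

def expAdImage (X : S n) (𝔯 : Submodule ℝ (E n)) : Submodule ℝ (S n) :=
  Submodule.map (expAd n X).toLinearMap (Submodule.span ℝ {B n} ⊔ Submodule.map (inE n) 𝔯)

theorem mem_expAdImage_iff {X v : S n} {𝔯 : Submodule ℝ (E n)} :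
    v ∈ expAdImage X 𝔯 ↔ ∃ b : ℝ, ∃ U ∈ 𝔯, v = expAd n X (b, U, 0) := by
  simp only [expAdImage, Submodule.mem_map, mem_span_singleton_sup_map_inE, smul_B_add_inE]
  constructor
  · rintro ⟨_, ⟨b, U, hU, rfl⟩, rfl⟩
    exact ⟨b, U, hU, rfl⟩
  · rintro ⟨b, U, hU, rfl⟩
    exact ⟨_, ⟨b, U, hU, rfl⟩, rfl⟩

/-- The value of `exp(ad(2JT + 2W + yZ))` at `bB + U` when `W ⟂ JU`. -/
def imageVec (T W : E n) (y b : ℝ) (U : E n) : S n :=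
  (b, U - b • (Complex.I • T + W), -(b * y) - 2 * ⟪T, U⟫)

theorem expAd_apply_of_inner_I_smul_eq_zero {T W U : E n} (hWU : ⟪W, Complex.I • U⟫ = 0)
    (y b : ℝ) :
    expAd n ((0, (2 : ℝ) • (Complex.I • T) + (2 : ℝ) • W, y) : S n) (b, U, 0) =
      imageVec T W y b U := by
  rw [expAd_apply_of_fst_eq_zero rfl, ad_apply]
  have hIP : Complex.I • ((2 : ℝ) • (Complex.I • T) + (2 : ℝ) • W) =
      (-2 : ℝ) • T + (2 : ℝ) • (Complex.I • W) := by
    rw [smul_add, smul_comm Complex.I (2 : ℝ), smul_comm Complex.I (2 : ℝ), I_smul_I_smul]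
    module
  refine Prod.ext ?_ (Prod.ext ?_ ?_)
  · simp [bra, imageVec]
  · simp only [bra, imageVec, Prod.snd_add, Prod.fst_add]
    module
  · simp only [bra, imageVec, Prod.snd_add, hIP, inner_add_left, real_inner_smul_left,
      inner_I_smul_left, hWU]
    ring

section TiltedImage

variable {𝔯 : Submodule ℝ (E n)} {T W : E n}

theorem mem_expAdImage_iff_imageVec
    (hW : ∀ u ∈ 𝔯, ⟪W, Complex.I • u⟫ = 0) (y : ℝ) {v : S n} :
    v ∈ expAdImage ((0, (2 : ℝ) • (Complex.I • T) + (2 : ℝ) • W, y) : S n) 𝔯 ↔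
      ∃ b : ℝ, ∃ U ∈ 𝔯, v = imageVec T W y b U := by
  rw [mem_expAdImage_iff]
  refine exists_congr fun b => ?_
  constructor
  · rintro ⟨U, hU, rfl⟩
    exact ⟨U, hU, expAd_apply_of_inner_I_smul_eq_zero (hW U hU) y b⟩
  · rintro ⟨U, hU, rfl⟩
    exact ⟨U, hU, (expAd_apply_of_inner_I_smul_eq_zero (hW U hU) y b).symm⟩

theorem sInner_Js_imageVec (h𝔯 : TotallyRealE n 𝔯) (hT : T ∈ 𝔯)
    (hW : ∀ u ∈ 𝔯, ⟪W, u⟫ = 0 ∧ ⟪W, Complex.I • u⟫ = 0) (y : ℝ) {U U' : E n} (hU : U ∈ 𝔯)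
    (hU' : U' ∈ 𝔯) (b b' : ℝ) :
    sInner n (Js n (imageVec T W y b U)) (imageVec T W y b' U') =
      b' * ⟪T, U⟫ - b * ⟪T, U'⟫ := by
  have hIU : Complex.I • (U - b • (Complex.I • T + W)) =
      Complex.I • U + b • T - b • (Complex.I • W) := by
    rw [smul_sub, smul_comm Complex.I b, smul_add, I_smul_I_smul]
    module
  have hIUU' : ⟪Complex.I • U, U'⟫ = 0 := h𝔯 U hU U' hU'
  have hIUIT : ⟪Complex.I • U, Complex.I • T⟫ = ⟪T, U⟫ := by
    rw [inner_I_smul_I_smul, real_inner_comm]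
  have hIUW : ⟪Complex.I • U, W⟫ = 0 := by rw [real_inner_comm]; exact (hW U hU).2
  have hTIT : ⟪T, Complex.I • T⟫ = 0 := by rw [real_inner_comm]; exact h𝔯 T hT T hT
  have hTW : ⟪T, W⟫ = 0 := by rw [real_inner_comm]; exact (hW T hT).1
  have hIWU' : ⟪Complex.I • W, U'⟫ = 0 := by rw [inner_I_smul_left, (hW U' hU').2, neg_zero]
  have hIWIT : ⟪Complex.I • W, Complex.I • T⟫ = 0 := by
    rw [inner_I_smul_I_smul]; exact (hW T hT).1
  simp only [Js_apply, imageVec, sInner, hIU, inner_sub_left, inner_sub_right, inner_add_left,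
    inner_add_right, real_inner_smul_left, real_inner_smul_right, hIUU', hIUIT, hIUW, hTIT, hTW,
    hIWU', hIWIT, inner_I_smul_self]
  ring

theorem eq_zero_of_mem_maxCS (h𝔯 : TotallyRealE n 𝔯) (hT : T ∈ 𝔯)
    (hW : ∀ u ∈ 𝔯, ⟪W, u⟫ = 0 ∧ ⟪W, Complex.I • u⟫ = 0) (y : ℝ) {w : S n}
    (hw : w ∈ maxCS n (expAdImage ((0, (2 : ℝ) • (Complex.I • T) + (2 : ℝ) • W, y) : S n) 𝔯)) :
    w = 0 := by
  have hmem := fun v => mem_expAdImage_iff_imageVec (T := T) (fun u hu => (hW u hu).2) y (v := v)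
  obtain ⟨b, U, hU, hwU⟩ := (hmem w).1 hw.1
  obtain ⟨b', U', hU', hJwU'⟩ := (hmem _).1 hw.2
  have hnorm : sInner n w w = b' * ⟪T, U⟫ - b * ⟪T, U'⟫ := by
    rw [← sInner_Js_Js, ← sInner_Js_imageVec h𝔯 hT hW y hU hU', ← hwU, ← hJwU']
  have hB : w.1 = b := congrArg Prod.fst hwU
  have hZ : w.2.2 = -(b * y) - 2 * ⟪T, U⟫ := congrArg (·.2.2) hwU
  have hJB : -w.2.2 = b' := congrArg Prod.fst hJwU'
  have hJZ : w.1 = -(b' * y) - 2 * ⟪T, U'⟫ := congrArg (·.2.2) hJwU'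
  subst hB hJB
  unfold sInner at hnorm
  have hsum : w.1 * w.1 + w.2.2 * w.2.2 + 2 * ⟪w.2.1, w.2.1⟫ = 0 := by
    linear_combination 2 * hnorm - w.2.2 * hZ - w.1 * hJZ
  refine sInner_self_eq_zero.1 (le_antisymm ?_ (sInner_self_nonneg w))
  unfold sInner
  linarith [real_inner_self_nonneg (x := w.2.1)]

theorem totallyRealS_expAdImage_iff (h𝔯 : TotallyRealE n 𝔯) (hT : T ∈ 𝔯)
    (hW : ∀ u ∈ 𝔯, ⟪W, u⟫ = 0 ∧ ⟪W, Complex.I • u⟫ = 0) (y : ℝ) :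
    TotallyRealS n (expAdImage ((0, (2 : ℝ) • (Complex.I • T) + (2 : ℝ) • W, y) : S n) 𝔯) ↔
      T = 0 := by
  have hmem := fun v => mem_expAdImage_iff_imageVec (T := T) (fun u hu => (hW u hu).2) y (v := v)
  constructor
  · intro h
    have hω := h _ ((hmem _).2 ⟨0, T, hT, rfl⟩) _ ((hmem _).2 ⟨1, 0, 𝔯.zero_mem, rfl⟩)
    rw [sInner_Js_imageVec h𝔯 hT hW y hT 𝔯.zero_mem] at hω
    simpa using hω
  · rintro rfl u hu v hv
    obtain ⟨b, U, hU, rfl⟩ := (hmem u).1 hu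
    obtain ⟨b', U', hU', rfl⟩ := (hmem v).1 hv
    simp [sInner_Js_imageVec h𝔯 hT hW y hU hU']

theorem imageVec_zero_left (W : E n) (y b : ℝ) (U : E n) :
    imageVec 0 W y b U = b • ((1, -W, -y) : S n) + inE n U := by
  refine Prod.ext ?_ (Prod.ext ?_ ?_) <;> simp [imageVec, inE]
  module

theorem expAdImage_zero
    (hW : ∀ u ∈ 𝔯, ⟪W, Complex.I • u⟫ = 0) (y : ℝ) :
    expAdImage ((0, (2 : ℝ) • (Complex.I • (0 : E n)) + (2 : ℝ) • W, y) : S n) 𝔯 =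
      Submodule.span ℝ {((1, -W, -y) : S n)} ⊔ Submodule.map (inE n) 𝔯 := by
  ext v
  rw [mem_expAdImage_iff_imageVec hW, mem_span_singleton_sup_map_inE]
  simp only [imageVec_zero_left]

end TiltedImage

theorem statement11_general (n : ℕ) (𝔯 : Submodule ℝ (E n)) (h𝔯 : TotallyRealE n 𝔯)
    (T : E n) (hT : T ∈ 𝔯) (W : E n)
    (hW : ∀ u ∈ 𝔯, ⟪W, u⟫ = 0 ∧ ⟪W, Complex.I • u⟫ = 0) (y : ℝ) :
    (IsCRS n
      ((Submodule.map
          (expAd n ((0, (2 : ℝ) • (Complex.I • T) + (2 : ℝ) • W, y) : S n)).toLinearMap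
          (Submodule.span ℝ {B n} ⊔ Submodule.map (inE n) 𝔯) : Submodule ℝ (S n)) :
        Set (S n)) ↔ T = 0) ∧
    (T = 0 →
      Submodule.map
          (expAd n ((0, (2 : ℝ) • (Complex.I • T) + (2 : ℝ) • W, y) : S n)).toLinearMap
          (Submodule.span ℝ {B n} ⊔ Submodule.map (inE n) 𝔯) =
        Submodule.span ℝ {((1, -W, -y) : S n)} ⊔ Submodule.map (inE n) 𝔯 ∧
      TotallyRealS n
        ((Submodule.map
            (expAd n ((0, (2 : ℝ) • (Complex.I • T) + (2 : ℝ) • W, y) : S n)).toLinearMap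
            (Submodule.span ℝ {B n} ⊔ Submodule.map (inE n) 𝔯) : Submodule ℝ (S n)) :
          Set (S n))) := by
  have hTR := totallyRealS_expAdImage_iff h𝔯 hT hW y
  refine ⟨(isCRS_iff_totallyRealS fun w hw => eq_zero_of_mem_maxCS h𝔯 hT hW y hw).trans hTR, ?_⟩
  rintro rfl
  exact ⟨expAdImage_zero (fun u hu => (hW u hu).2) y, hTR.2 rfl⟩

/-- for `𝔯` totally real, `T ∈ 𝔯`, `W ⟂ ℂ𝔯`, `y ∈ ℝ`, the subspace
`exp(ad(2JT+2W+yZ))(ℝB ⊕ 𝔯)` of `𝔰` is a CR subspace iff `T = 0`; in that case it equals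
`ℝ(B − W − yZ) ⊕ 𝔯` and is totally real. -/
theorem statement11 (n : ℕ) (hn : 2 ≤ n) (𝔯 : Submodule ℝ (E n)) (h𝔯 : TotallyRealE n 𝔯)
    (T : E n) (hT : T ∈ 𝔯) (W : E n)
    (hW : ∀ u ∈ 𝔯, ⟪W, u⟫ = 0 ∧ ⟪W, Complex.I • u⟫ = 0) (y : ℝ) :
    (IsCRS n
      ((Submodule.map
          (expAd n ((0, (2 : ℝ) • (Complex.I • T) + (2 : ℝ) • W, y) : S n)).toLinearMap
          (Submodule.span ℝ {B n} ⊔ Submodule.map (inE n) 𝔯) : Submodule ℝ (S n)) :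
        Set (S n)) ↔ T = 0) ∧
    (T = 0 →
      Submodule.map
          (expAd n ((0, (2 : ℝ) • (Complex.I • T) + (2 : ℝ) • W, y) : S n)).toLinearMap
          (Submodule.span ℝ {B n} ⊔ Submodule.map (inE n) 𝔯) =
        Submodule.span ℝ {((1, -W, -y) : S n)} ⊔ Submodule.map (inE n) 𝔯 ∧
      TotallyRealS n
        ((Submodule.map
            (expAd n ((0, (2 : ℝ) • (Complex.I • T) + (2 : ℝ) • W, y) : S n)).toLinearMap
            (Submodule.span ℝ {B n} ⊔ Submodule.map (inE n) 𝔯) : Submodule ℝ (S n)) :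
          Set (S n))) :=
  statement11_general n 𝔯 h𝔯 T hT W hW y

end CHn
end
end
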